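/- Two distinct oriented lines γ, γ̃ in ℝ³ satisfy Q(γ, γ̃) = |Z₁ - Z̃₁|² - |Z₂ - Z̃₂|² = 0 in the conformal coordinates (Z₁, Z₂) if and only if the lines either intersect or are parallel. -/

import Mathlib

/-!
Over the upper hemisphere the line `(ξ, η)` is the graph `t ↦ (α + t β, t)` of the height
`t`, with `α = johnBase ξ η` and `β = johnSlope ξ`, and John's coordinates are
`Z₁ = α - iβ`, `Z₂ = α + iβ`. Hence `Q = 4 Im((α̃ - α) conj (β - β̃))`. When `ξ ≠ ξ̃` we have
`β ≠ β̃` (`ξ ↦ 2ξ / (1 - |ξ|²)` is injective on the disc), so `Q` vanishes iff `α̃ - α` is a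
real multiple `t (β - β̃)`, which says exactly that the two lines pass through the same point
at height `t`.
-/

open Complex

/-- The oriented line in `ℝ³ = ℂ × ℝ` with direction `ξ` (stereographic coordinate) and
fibre coordinate `η`, given by the incidence relation `η = ½(z − 2tξ − z̄ξ²)`. -/
def johnLine (ξ η : ℂ) : Set (ℂ × ℝ) :=
  {p | η = (p.1 - 2 * (p.2 : ℂ) * ξ - (starRingEnd ℂ) p.1 * ξ ^ 2) / 2}

/-- John's conformal coordinate `Z₁ = X₁ + iX₂` on line space (upper hemisphere `|ξ| < 1`). -/
noncomputable def johnZ₁ (ξ η : ℂ) : ℂ :=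
  2 * (η + ξ ^ 2 * (starRingEnd ℂ) η - I * (1 + ξ * (starRingEnd ℂ) ξ) * ξ) /
    (1 - ξ ^ 2 * ((starRingEnd ℂ) ξ) ^ 2)

/-- John's conformal coordinate `Z₂ = X₃ + iX₄` on line space (upper hemisphere `|ξ| < 1`). -/
noncomputable def johnZ₂ (ξ η : ℂ) : ℂ :=
  2 * (η + ξ ^ 2 * (starRingEnd ℂ) η + I * (1 + ξ * (starRingEnd ℂ) ξ) * ξ) /
    (1 - ξ ^ 2 * ((starRingEnd ℂ) ξ) ^ 2)

/-- The neutral distance function `Q(γ,γ̃) = |Z₁ − Z̃₁|² − |Z₂ − Z̃₂|²`. -/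
noncomputable def neutralQ (ξ η ξ' η' : ℂ) : ℝ :=
  Complex.normSq (johnZ₁ ξ η - johnZ₁ ξ' η') - Complex.normSq (johnZ₂ ξ η - johnZ₂ ξ' η')

open ComplexConjugate

theorem injOn_inv_one_sub_norm_sq_smul {E : Type*} [NormedAddCommGroup E] [NormedSpace ℝ E] :
    Set.InjOn (fun x : E => (1 - ‖x‖ ^ 2)⁻¹ • x) (Metric.ball 0 1) := by
  intro x hx y hy hxy
  rw [mem_ball_zero_iff] at hx hy
  have hx0 : 0 < 1 - ‖x‖ ^ 2 := sub_pos.2 (pow_lt_one₀ (norm_nonneg x) hx two_ne_zero)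
  have hy0 : 0 < 1 - ‖y‖ ^ 2 := sub_pos.2 (pow_lt_one₀ (norm_nonneg y) hy two_ne_zero)
  have hnorm : ‖x‖ = ‖y‖ := by
    have h := congrArg norm hxy
    simp only [norm_smul, norm_inv, Real.norm_of_nonneg hx0.le, Real.norm_of_nonneg hy0.le,
      inv_mul_eq_div, div_eq_div_iff hx0.ne' hy0.ne'] at h
    have hfac : (‖x‖ - ‖y‖) * (1 + ‖x‖ * ‖y‖) = 0 := by linear_combination h
    have hpos : 1 + ‖x‖ * ‖y‖ ≠ 0 := by positivity
    exact sub_eq_zero.1 ((mul_eq_zero.1 hfac).resolve_right hpos)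
  simp only [hnorm] at hxy
  exact smul_right_injective E (inv_ne_zero hy0.ne') hxy

theorem Complex.normSq_sub_I_mul_sub_normSq_add_I_mul (a b : ℂ) :
    normSq (a - I * b) - normSq (a + I * b) = -4 * (a * conj b).im := by
  simp only [normSq_apply, sub_re, sub_im, add_re, add_im, mul_re, mul_im, I_re, I_im, conj_re,
    conj_im]
  ring

theorem Complex.im_mul_conj_eq_zero_iff {a w : ℂ} (hw : w ≠ 0) :
    (a * conj w).im = 0 ↔ ∃ s : ℝ, a = s * w := by
  constructor
  · intro h
    obtain ⟨r, hr⟩ := conj_eq_iff_real.1 (conj_eq_iff_im.2 h)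
    refine ⟨r / normSq w, ?_⟩
    have hconj : conj w ≠ 0 := (map_ne_zero _).2 hw
    rw [ofReal_div, ← hr, ← mul_conj]
    field_simp
  · rintro ⟨s, rfl⟩
    rw [mul_assoc, mul_conj, ← ofReal_mul, ofReal_im]

theorem Complex.sub_mul_conj_eq_iff {c z w : ℂ} (hc : 1 - c * conj c ≠ 0) :
    z - c * conj z = w ↔ z = (w + c * conj w) / (1 - c * conj c) := by
  rw [eq_div_iff hc]
  constructor
  · rintro rfl
    simp only [map_sub, map_mul, conj_conj]
    ring
  · intro h
    have h' := congrArg conj h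
    simp only [map_mul, map_add, map_sub, map_one, conj_conj] at h'
    apply mul_right_cancel₀ hc
    linear_combination h - c * h'

noncomputable def johnBase (ξ η : ℂ) : ℂ :=
  2 * (η + ξ ^ 2 * conj η) / (1 - ξ ^ 2 * conj ξ ^ 2)

noncomputable def johnSlope (ξ : ℂ) : ℂ := 2 * ξ / (1 - ξ * conj ξ)

theorem one_sub_mul_conj_ne_zero_of_norm_lt_one {ξ : ℂ} (hξ : ‖ξ‖ < 1) :
    1 - ξ * conj ξ ≠ 0 := by
  rw [mul_conj', ← ofReal_pow, ← ofReal_one, ← ofReal_sub, ofReal_ne_zero]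
  exact (sub_pos.2 (pow_lt_one₀ (norm_nonneg ξ) hξ two_ne_zero)).ne'

theorem one_sub_sq_mul_conj_sq_ne_zero_of_norm_lt_one {ξ : ℂ} (hξ : ‖ξ‖ < 1) :
    1 - ξ ^ 2 * conj ξ ^ 2 ≠ 0 := by
  have hplus : 1 + ξ * conj ξ ≠ 0 := by
    rw [mul_conj', ← ofReal_pow, ← ofReal_one, ← ofReal_add, ofReal_ne_zero]
    positivity
  rw [show 1 - ξ ^ 2 * conj ξ ^ 2 = (1 - ξ * conj ξ) * (1 + ξ * conj ξ) by ring]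
  exact mul_ne_zero (one_sub_mul_conj_ne_zero_of_norm_lt_one hξ) hplus

theorem johnZ₁_eq {ξ : ℂ} (hξ : ‖ξ‖ < 1) (η : ℂ) :
    johnZ₁ ξ η = johnBase ξ η - I * johnSlope ξ := by
  have h₁ := one_sub_mul_conj_ne_zero_of_norm_lt_one hξ
  have h₂ := one_sub_sq_mul_conj_sq_ne_zero_of_norm_lt_one hξ
  unfold johnZ₁ johnBase johnSlope
  field_simp
  ring

theorem johnZ₂_eq {ξ : ℂ} (hξ : ‖ξ‖ < 1) (η : ℂ) :
    johnZ₂ ξ η = johnBase ξ η + I * johnSlope ξ := by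
  have h₁ := one_sub_mul_conj_ne_zero_of_norm_lt_one hξ
  have h₂ := one_sub_sq_mul_conj_sq_ne_zero_of_norm_lt_one hξ
  unfold johnZ₂ johnBase johnSlope
  field_simp
  ring

theorem mem_johnLine_iff {ξ η : ℂ} (hξ : ‖ξ‖ < 1) {p : ℂ × ℝ} :
    p ∈ johnLine ξ η ↔ p.1 = johnBase ξ η + p.2 * johnSlope ξ := by
  obtain ⟨z, t⟩ := p
  have h₁ := one_sub_mul_conj_ne_zero_of_norm_lt_one hξ
  have h₂ := one_sub_sq_mul_conj_sq_ne_zero_of_norm_lt_one hξ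
  have hc : 1 - ξ ^ 2 * conj (ξ ^ 2) ≠ 0 := by rwa [map_pow]
  have hsolve :
      (2 * η + 2 * t * ξ + ξ ^ 2 * conj (2 * η + 2 * t * ξ)) / (1 - ξ ^ 2 * conj (ξ ^ 2)) =
        johnBase ξ η + t * johnSlope ξ := by
    unfold johnBase johnSlope
    simp only [map_add, map_mul, map_pow, map_ofNat, conj_ofReal]
    field_simp
    ring
  calc (z, t) ∈ johnLine ξ η ↔ z - ξ ^ 2 * conj z = 2 * η + 2 * t * ξ := by
        simp only [johnLine, Set.mem_ofPred_eq]
        constructor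
        · intro h
          linear_combination -2 * h
        · intro h
          linear_combination -h / 2
    _ ↔ _ := by rw [sub_mul_conj_eq_iff hc, hsolve]

theorem johnSlope_eq (ξ : ℂ) : johnSlope ξ = 2 * ((1 - ‖ξ‖ ^ 2)⁻¹ • ξ) := by
  rw [johnSlope, mul_conj', real_smul]
  push_cast
  ring

theorem johnSlope_injOn : Set.InjOn johnSlope (Metric.ball 0 1) := fun _ hξ _ hξ' h =>
  injOn_inv_one_sub_norm_sq_smul hξ hξ' <|
    mul_left_cancel₀ two_ne_zero (by rwa [johnSlope_eq, johnSlope_eq] at h)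

theorem neutralQ_eq_four_mul_im {ξ ξ' : ℂ} (η η' : ℂ) (hξ : ‖ξ‖ < 1) (hξ' : ‖ξ'‖ < 1) :
    neutralQ ξ η ξ' η' =
      4 * ((johnBase ξ' η' - johnBase ξ η) * conj (johnSlope ξ - johnSlope ξ')).im := by
  have hZ₁ : johnZ₁ ξ η - johnZ₁ ξ' η' =
      (johnBase ξ η - johnBase ξ' η') - I * (johnSlope ξ - johnSlope ξ') := by
    rw [johnZ₁_eq hξ, johnZ₁_eq hξ']
    ring
  have hZ₂ : johnZ₂ ξ η - johnZ₂ ξ' η' =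
      (johnBase ξ η - johnBase ξ' η') + I * (johnSlope ξ - johnSlope ξ') := by
    rw [johnZ₂_eq hξ, johnZ₂_eq hξ']
    ring
  rw [neutralQ, hZ₁, hZ₂, normSq_sub_I_mul_sub_normSq_add_I_mul, ← neg_sub (johnBase ξ η),
    neg_mul (johnBase ξ η - johnBase ξ' η'), neg_im]
  ring

theorem exists_mem_johnLine_inter_iff {ξ ξ' : ℂ} (η η' : ℂ) (hξ : ‖ξ‖ < 1)
    (hξ' : ‖ξ'‖ < 1) :
    (∃ p, p ∈ johnLine ξ η ∧ p ∈ johnLine ξ' η') ↔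
      ∃ t : ℝ, johnBase ξ' η' - johnBase ξ η = t * (johnSlope ξ - johnSlope ξ') := by
  simp only [mem_johnLine_iff hξ, mem_johnLine_iff hξ']
  constructor
  · rintro ⟨⟨z, t⟩, h, h'⟩
    exact ⟨t, by linear_combination h - h'⟩
  · rintro ⟨t, ht⟩
    exact ⟨(johnBase ξ η + t * johnSlope ξ, t), rfl, by linear_combination -ht⟩

theorem neutralQ_zero_iff_intersect_or_parallel
    (ξ η ξ' η' : ℂ) (hξ : ‖ξ‖ < 1) (hξ' : ‖ξ'‖ < 1) :
    neutralQ ξ η ξ' η' = 0 ↔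
      (∃ p : ℂ × ℝ, p ∈ johnLine ξ η ∧ p ∈ johnLine ξ' η') ∨ ξ = ξ' := by
  rw [neutralQ_eq_four_mul_im η η' hξ hξ', mul_eq_zero, or_iff_right four_ne_zero,
    exists_mem_johnLine_inter_iff η η' hξ hξ']
  by_cases hparallel : ξ = ξ'
  · simp [hparallel]
  · have hslope : johnSlope ξ - johnSlope ξ' ≠ 0 := sub_ne_zero.2 fun h =>
      hparallel (johnSlope_injOn (mem_ball_zero_iff.2 hξ) (mem_ball_zero_iff.2 hξ') h)
    rw [im_mul_conj_eq_zero_iff hslope, or_iff_left hparallel]
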